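/- Let G = (V,E) be an undirected graph with V = {1,…,n}, with a propositional variable p_e for every edge e, and for each vertex i let ψ_i = ⋀{ p_e : e = {i,j} ∈ E and i < j } ∧ ⋀{ p̄_e : e = {i,j} ∈ E and i > j }. Let F₃ be the frame with four worlds {r, a, b, c} and accessibility relation {(r,a), (r,b), (r,c)} (a root with exactly three successor leaves). Then the formula f(G) = ⋀_{i=1}^n ◇ψ_i is satisfiable in the frame F₃ (true at some world of some model based on F₃) if and only if G is 3-colorable, i.e., there is a coloring of V with three colors such that adjacent vertices receive different colors. -/

import Mathlib

namespace PoorMansModal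

/-- Modal formulas over propositional variables of type `α`: variables `p`,
negated variables `p̄`, general negation, conjunction, disjunction, box, diamond,
and the constants `true` and `false`. -/
inductive Fml (α : Type) : Type where
  | var : α → Fml α
  | nvar : α → Fml α
  | neg : Fml α → Fml α
  | and : Fml α → Fml α → Fml α
  | or : Fml α → Fml α → Fml α
  | box : Fml α → Fml α
  | dia : Fml α → Fml α
  | tru : Fml α
  | fls : Fml α

/-- A Kripke model: a nonempty set of worlds, an accessibility relation, and a valuation. -/
structure Kripke (α : Type) where
  World : Type
  nonempty : Nonempty World
  R : World → World → Prop
  V : α → World → Prop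

/-- Truth of a formula at a world of a model. -/
def Sat {α : Type} (M : Kripke α) : Fml α → M.World → Prop
  | .var p, w => M.V p w
  | .nvar p, w => ¬ M.V p w
  | .neg φ, w => ¬ Sat M φ w
  | .and φ ψ, w => Sat M φ w ∧ Sat M ψ w
  | .or φ ψ, w => Sat M φ w ∨ Sat M ψ w
  | .box φ, w => ∀ v, M.R w v → Sat M φ v
  | .dia φ, w => ∃ v, M.R w v ∧ Sat M φ v
  | .tru, _ => True
  | .fls, _ => False

/-- Modal depth: depth of nesting of `□` and `◇`. -/
def mdep {α : Type} : Fml α → ℕ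
  | .var _ => 0
  | .nvar _ => 0
  | .neg φ => mdep φ
  | .and φ ψ => max (mdep φ) (mdep ψ)
  | .or φ ψ => max (mdep φ) (mdep ψ)
  | .box φ => mdep φ + 1
  | .dia φ => mdep φ + 1
  | .tru => 0
  | .fls => 0

/-- Conjunction of a list of formulas; the empty conjunction is the always-true formula. -/
def bigConj {α : Type} : List (Fml α) → Fml α
  | [] => .tru
  | [φ] => φ
  | φ :: rest => .and φ (bigConj rest)

/-- `□^k φ`. -/
def boxI {α : Type} : ℕ → Fml α → Fml α
  | 0, φ => φ
  | k + 1, φ => .box (boxI k φ)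

/-- `◇^k φ`. -/
def diaI {α : Type} : ℕ → Fml α → Fml α
  | 0, φ => φ
  | k + 1, φ => .dia (diaI k φ)

/-- `(◇□)^k φ`. -/
def diaBoxI {α : Type} : ℕ → Fml α → Fml α
  | 0, φ => φ
  | k + 1, φ => .dia (.box (diaBoxI k φ))

/-- The literal with variable `l.1` and sign `l.2` (`true` = positive). -/
def litF {α : Type} (l : α × Bool) : Fml α := if l.2 then .var l.1 else .nvar l.1

/-- The variable `p` occurs in the formula. -/
def occursV {α : Type} (p : α) : Fml α → Prop
  | .var q => p = q
  | .nvar q => p = q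
  | .neg φ => occursV p φ
  | .and φ ψ => occursV p φ ∨ occursV p ψ
  | .or φ ψ => occursV p φ ∨ occursV p ψ
  | .box φ => occursV p φ
  | .dia φ => occursV p φ
  | .tru => False
  | .fls => False

/-- Poor man's formulas: built from literals, `∧`, `□`, `◇` only. -/
def PoorF {α : Type} : Fml α → Prop
  | .var _ => True
  | .nvar _ => True
  | .and φ ψ => PoorF φ ∧ PoorF ψ
  | .box φ => PoorF φ
  | .dia φ => PoorF φ
  | _ => False

/-- Formulas of the language `L`: built from literals, `∧`, `∨`, `□`, `◇`. -/
def InL {α : Type} : Fml α → Prop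
  | .var _ => True
  | .nvar _ => True
  | .and φ ψ => InL φ ∧ InL ψ
  | .or φ ψ => InL φ ∧ InL ψ
  | .box φ => InL φ
  | .dia φ => InL φ
  | _ => False

/-- Every world has at most one successor. -/
def AtMostOne {W : Type} (R : W → W → Prop) : Prop :=
  ∀ w v v', R w v → R w v' → v = v'

/-- Every world has at least one successor. -/
def AtLeastOne {W : Type} (R : W → W → Prop) : Prop :=
  ∀ w, ∃ v, R w v

/-- Every world has at most two successors. -/
def AtMostTwo {W : Type} (R : W → W → Prop) : Prop :=
  ∀ w v₁ v₂ v₃, R w v₁ → R w v₂ → R w v₃ → v₁ = v₂ ∨ v₁ = v₃ ∨ v₂ = v₃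

/-- `chainR R n w v`: there is an `R`-path of length exactly `n` from `w` to `v`. -/
def chainR {W : Type} (R : W → W → Prop) : ℕ → W → W → Prop
  | 0, w, v => w = v
  | k + 1, w, v => ∃ u, R w u ∧ chainR R k u v

/-- `R` is the parent-child relation of a rooted tree with root `root`
in which every node has at most two children. -/
structure IsBinTree {W : Type} (R : W → W → Prop) (root : W) : Prop where
  reach : ∀ w, Relation.ReflTransGen R root w
  root_no_parent : ∀ w, ¬ R w root
  unique_parent : ∀ w v v', R v w → R v' w → v = v'
  acyclic : ∀ w, ¬ Relation.TransGen R w w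
  at_most_two_children : ∀ w v₁ v₂ v₃, R w v₁ → R w v₂ → R w v₃ → v₁ = v₂ ∨ v₁ = v₃ ∨ v₂ = v₃

/-- `φ_exp = ⋀_{i=1}^n □^{i-1}(◇□^{n-i} p_i ∧ ◇□^{n-i} p̄_i)`, with `p_i = var i`. -/
def phiExp (n : ℕ) : Fml ℕ :=
  bigConj ((List.range n).map (fun j =>
    boxI j (.and (.dia (boxI (n - 1 - j) (.var (j + 1))))
                 (.dia (boxI (n - 1 - j) (.nvar (j + 1)))))))

/-- Satisfiability with respect to the class of all frames. -/
def SatAll (φ : Fml ℕ) : Prop := ∃ (M : Kripke ℕ) (w : M.World), Sat M φ w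

/-- Satisfiability with respect to `F≤1`. -/
def SatLe1 (φ : Fml ℕ) : Prop := ∃ M : Kripke ℕ, AtMostOne M.R ∧ ∃ w, Sat M φ w

/-- Satisfiability with respect to `F≥1`. -/
def SatGe1 (φ : Fml ℕ) : Prop := ∃ M : Kripke ℕ, AtLeastOne M.R ∧ ∃ w, Sat M φ w

/-- Satisfiability with respect to `F≤2`. -/
def SatLe2 (φ : Fml ℕ) : Prop := ∃ M : Kripke ℕ, AtMostTwo M.R ∧ ∃ w, Sat M φ w

/-- A one-world model with no successors, realizing the boolean assignment `v`;
truth at its world is propositional truth for formulas without modal operators. -/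
def propModel (v : ℕ → Bool) : Kripke ℕ :=
  { World := Unit, nonempty := ⟨()⟩, R := fun _ _ => False, V := fun p _ => v p = true }

/-- Propositional satisfaction of `φ` under the assignment `v`. -/
def PropSat (v : ℕ → Bool) (φ : Fml ℕ) : Prop := Sat (propModel v) φ ()


/-- The formula `ψ_i` for a vertex `i` of a graph `G`: the conjunction of the variables
`p_e` for edges `e = {i,j}` with `i < j` and of the negated variables `p̄_e` for edges
`e = {i,j}` with `i > j`. -/
noncomputable def psiV {n : ℕ} (G : SimpleGraph (Fin n)) [DecidableRel G.Adj] (i : Fin n) :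
    Fml (Sym2 (Fin n)) :=
  bigConj
    (((Finset.univ.filter (fun j => G.Adj i j ∧ i < j)).toList.map
        (fun j => Fml.var s(i, j))) ++
     ((Finset.univ.filter (fun j => G.Adj i j ∧ j < i)).toList.map
        (fun j => Fml.nvar s(i, j))))

/-- The frame `F₃`: a root `0` with exactly the three successor leaves `1`, `2`, `3`. -/
def F3R : Fin 4 → Fin 4 → Prop := fun w v => w = 0 ∧ v ≠ 0

theorem sat_bigConj {α : Type} (M : Kripke α) (w : M.World) :
    ∀ l : List (Fml α), Sat M (bigConj l) w ↔ ∀ φ ∈ l, Sat M φ w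
  | [] => by simp [bigConj, Sat]
  | [φ] => by simp [bigConj]
  | φ :: ψ :: rest => by
      simp only [bigConj, Sat, sat_bigConj M w (ψ :: rest), List.forall_mem_cons]

section GraphFormula

variable {n : ℕ} (G : SimpleGraph (Fin n)) [DecidableRel G.Adj]

theorem sat_psiV (i : Fin n) (M : Kripke (Sym2 (Fin n))) (w : M.World) :
    Sat M (psiV G i) w ↔
      (∀ j, G.Adj i j → i < j → M.V s(i, j) w) ∧ (∀ j, G.Adj i j → j < i → ¬ M.V s(i, j) w) := by
  simp only [psiV, sat_bigConj, List.forall_mem_append, List.forall_mem_map, Finset.mem_toList,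
    Finset.mem_filter, Finset.mem_univ, true_and, Sat, and_imp]

/-- The edge variable `p_{ij}` separates the worlds where `ψ_i` and `ψ_j` hold. -/
theorem ne_of_sat_psiV {M : Kripke (Sym2 (Fin n))} {i j : Fin n} (hij : G.Adj i j)
    {u v : M.World} (hu : Sat M (psiV G i) u) (hv : Sat M (psiV G j) v) : u ≠ v := by
  rintro rfl
  rw [sat_psiV] at hu hv
  rcases (G.ne_of_adj hij).lt_or_gt with hlt | hlt
  · exact Sym2.eq_swap (a := i) ▸ hv.2 i hij.symm hlt <| hu.1 j hij hlt
  · exact hu.2 j hij hlt <| Sym2.eq_swap (a := j) ▸ hv.1 i hij.symm hlt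

noncomputable def graphFml : Fml (Sym2 (Fin n)) :=
  bigConj ((List.finRange n).map fun i => Fml.dia (psiV G i))

theorem sat_graphFml (M : Kripke (Sym2 (Fin n))) (w : M.World) :
    Sat M (graphFml G) w ↔ ∀ i, ∃ v, M.R w v ∧ Sat M (psiV G i) v := by
  simp only [graphFml, sat_bigConj, List.forall_mem_map, List.mem_finRange, true_imp_iff, Sat]

/-- The successors of `w` serve as the colours: `◇ψᵢ` picks a colour for `i`, and
conversely a colouring is realized by making `p_e` true exactly at the colour of the smaller
endpoint of `e`. -/
theorem exists_sat_graphFml_iff {W : Type} (hW : Nonempty W) (R : W → W → Prop) (w : W) :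
    (∃ V, Sat (Kripke.mk W hW R V) (graphFml G) w) ↔ Nonempty (G.Coloring {v // R w v}) := by
  constructor
  · rintro ⟨V, hV⟩
    choose c hc hsat using (sat_graphFml G ⟨W, hW, R, V⟩ w).mp hV
    exact ⟨.mk (fun i => ⟨c i, hc i⟩) fun hij he =>
      ne_of_sat_psiV G hij (hsat _) (hsat _) (congrArg Subtype.val he)⟩
  · rintro ⟨C⟩
    refine ⟨fun e v => (C e.inf).1 = v,
      (sat_graphFml G ⟨W, hW, R, _⟩ w).mpr fun i => ⟨C i, (C i).2, ?_⟩⟩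
    refine (sat_psiV G i _ _).mpr ⟨fun j _ hlt => ?_, fun j hij hlt => ?_⟩
    · simp [hlt.le]
    · simpa [hlt.le, Subtype.val_inj] using C.valid hij.symm

end GraphFormula

def f3LeafEquiv : {v : Fin 4 // F3R 0 v} ≃ Fin 3 :=
  (Equiv.subtypeEquivRight fun _ => and_iff_right rfl).trans (finSuccAboveEquiv 0).symm

/-- `f(G) = ⋀_{i=1}^n ◇ψ_i` is satisfiable in the frame `F₃`
(a root with exactly three successor leaves) iff `G` is 3-colorable. -/
theorem stmt3 (n : ℕ) (G : SimpleGraph (Fin n)) [DecidableRel G.Adj] :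
    (∃ (V : Sym2 (Fin n) → Fin 4 → Prop) (w : Fin 4),
        Sat (Kripke.mk (Fin 4) ⟨0⟩ F3R V)
          (bigConj ((List.finRange n).map (fun i => Fml.dia (psiV G i)))) w) ↔
      ∃ c : Fin n → Fin 3, ∀ i j : Fin n, G.Adj i j → c i ≠ c j := by
  constructor
  · rintro ⟨V, w, hw⟩
    obtain ⟨C⟩ := (exists_sat_graphFml_iff G ⟨0⟩ F3R w).mp ⟨V, hw⟩
    let toRoot : {v // F3R w v} ↪ {v // F3R 0 v} := Subtype.impEmbedding _ _ fun _ h => ⟨rfl, h.2⟩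
    let C₃ := G.recolorOfEmbedding (toRoot.trans f3LeafEquiv.toEmbedding) C
    exact ⟨C₃, fun _ _ hij => C₃.valid hij⟩
  · rintro ⟨c, hc⟩
    obtain ⟨V, hV⟩ := (exists_sat_graphFml_iff G ⟨0⟩ F3R 0).mpr
      ⟨G.recolorOfEquiv f3LeafEquiv.symm (.mk c fun hij => hc _ _ hij)⟩
    exact ⟨V, 0, hV⟩

end PoorMansModal
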